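/- For π, ρ ∈ NC(n), the meandric system M_{π,ρ} is a meander (i.e., the permutation M_{π,ρ} ∈ S_{2n} has exactly one orbit) if and only if A(π) ∨̃ A(ρ) = 1_{2n}, where ∨̃ denotes the join in the lattice P(2n) of all partitions of {1,...,2n}. -/

import Mathlib

open scoped Classical

/-- A setoid (partition) of `Fin n` is non-crossing if there is no crossing
`a < b < c < d` with `a ∼ c`, `b ∼ d` but `a` and `b` in distinct blocks. -/
def IsNC {n : ℕ} (S : Setoid (Fin n)) : Prop :=
  ∀ a b c d : Fin n, a < b → b < c → c < d → S.r a c → S.r b d → S.r a b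

/-- A partition is a pairing if every block has exactly two elements. -/
def IsPairing {m : ℕ} (T : Setoid (Fin m)) : Prop :=
  ∀ x : Fin m, ∃ y : Fin m, y ≠ x ∧ T.r x y ∧ ∀ z : Fin m, T.r x z → z = x ∨ z = y

/-- The block of `i` in the partition `S`, as a finset. -/
noncomputable def blockOf {n : ℕ} (S : Setoid (Fin n)) (i : Fin n) : Finset (Fin n) :=
  Finset.univ.filter (fun j => S.r i j)

lemma blockOf_nonempty {n : ℕ} (S : Setoid (Fin n)) (i : Fin n) :
    (blockOf S i).Nonempty :=
  ⟨i, by simp [blockOf, S.iseqv.refl i]⟩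

/-- The permutation `P_S` which performs an increasing cycle on every block of `S`:
it sends `i` to the next larger element of its block, or to the minimum of the
block if `i` is the largest element of its block. -/
noncomputable def nextP {n : ℕ} (S : Setoid (Fin n)) (i : Fin n) : Fin n :=
  if h : ((blockOf S i).filter (fun j => i < j)).Nonempty
  then ((blockOf S i).filter (fun j => i < j)).min' h
  else (blockOf S i).min' (blockOf_nonempty S i)

/-- The inverse permutation `P_S⁻¹` (decreasing cycle on every block of `S`). -/
noncomputable def prevP {n : ℕ} (S : Setoid (Fin n)) (i : Fin n) : Fin n :=
  if h : ((blockOf S i).filter (fun j => j < i)).Nonempty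
  then ((blockOf S i).filter (fun j => j < i)).max' h
  else (blockOf S i).max' (blockOf_nonempty S i)

/-- `0`-indexed version of the point `2i-1` of `{1,…,2n}`. -/
def dEven {n : ℕ} (j : Fin n) : Fin (2*n) := ⟨2*j.val, by have := j.isLt; omega⟩

/-- `0`-indexed version of the point `2i` of `{1,…,2n}`. -/
def dOdd {n : ℕ} (j : Fin n) : Fin (2*n) := ⟨2*j.val+1, by have := j.isLt; omega⟩

/-- The doubling construction `π ↦ A(π)`: the pairing of `{1,…,2n}` generated by
pairing each point `2i` with `2P_π(i) - 1`, so that the associated permutation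
satisfies `P_{A(π)}(2i) = 2P_π(i) - 1` and `P_{A(π)}(2i-1) = 2P_π⁻¹(i)`. -/
noncomputable def archSetoid {n : ℕ} (S : Setoid (Fin n)) : Setoid (Fin (2*n)) :=
  Relation.EqvGen.setoid (fun a b => ∃ j : Fin n, a = dOdd j ∧ b = dEven (nextP S j))

/-- The meandric system permutation `M_{π,ρ} ∈ S_{2n}`, defined by
`M_{π,ρ}(2i-1) = 2P_π⁻¹(i)` and `M_{π,ρ}(2i) = 2P_ρ(i) - 1` (here `0`-indexed). -/
noncomputable def meanderMap {n : ℕ} (π ρ : Setoid (Fin n)) (x : Fin (2*n)) : Fin (2*n) :=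
  if x.val % 2 = 0
  then dOdd (prevP π ⟨x.val / 2, by have := x.isLt; omega⟩)
  else dEven (nextP ρ ⟨x.val / 2, by have := x.isLt; omega⟩)

/-- The orbit partition of a map. -/
def orbitSetoid {m : ℕ} (f : Fin m → Fin m) : Setoid (Fin m) :=
  Relation.EqvGen.setoid (fun a b => f a = b)

/-- Number of orbits of a map. -/
noncomputable def numOrbits {m : ℕ} (f : Fin m → Fin m) : ℕ :=
  Nat.card (Quotient (orbitSetoid f))

/-- `S` is a union of blocks of the partition `T`. -/
def IsBlockUnion {m : ℕ} (T : Setoid (Fin m)) (S : Set (Fin m)) : Prop :=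
  ∀ x ∈ S, ∀ y, T.r x y → y ∈ S

/-- `S` is invariant under `f`. -/
def MInvariant {m : ℕ} (f : Fin m → Fin m) (S : Set (Fin m)) : Prop :=
  ∀ x ∈ S, f x ∈ S

/-- The meandric system `M_{π,ρ}` is reducible: some proper subinterval
`{a,…,b}` of `{1,…,2n}` is invariant under `M_{π,ρ}`. -/
noncomputable def Reducible {n : ℕ} (π ρ : Setoid (Fin n)) : Prop :=
  ∃ a b : Fin (2*n), a ≤ b ∧ b.val - a.val < 2*n - 1 ∧
    MInvariant (meanderMap π ρ) {x | a ≤ x ∧ x ≤ b}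

/-- The join in the lattice of non-crossing partitions: the smallest
non-crossing partition above both `π` and `ρ`. -/
noncomputable def ncJoin {m : ℕ} (π ρ : Setoid (Fin m)) : Setoid (Fin m) :=
  sInf {τ | IsNC τ ∧ π ≤ τ ∧ ρ ≤ τ}

/-- The moment-cumulant formula of free probability: `mom n` is the sum over all
non-crossing partitions of `{1,…,n}` of the products of cumulants `κ` indexed
by the block sizes.  This uniquely determines the free cumulants `κ n`, `n ≥ 1`,
of a sequence of moments. -/
def MomCum {F : Type*} [Field F] (mom κ : ℕ → F) : Prop :=
  ∀ n : ℕ, 0 < n →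
    mom n = ∑ᶠ S ∈ {S : Setoid (Fin n) | IsNC S}, ∏ᶠ B ∈ Setoid.classes S, κ B.ncard

/-- The number of irreducible meandric systems on `2k` bridges, described as the
number of pairs `(π,ρ) ∈ NC(k)²` with `π ∨ ρ = 1_k`, `π ∧ ρ = 0_k`. -/
noncomputable def mirr (k : ℕ) : ℕ :=
  Nat.card {pr : Setoid (Fin k) × Setoid (Fin k) //
    IsNC pr.1 ∧ IsNC pr.2 ∧ ncJoin pr.1 pr.2 = ⊤ ∧ pr.1 ⊓ pr.2 = ⊥}

/-- The number of pairs `(π,ρ) ∈ NC(n)²` whose meandric system `M_{π,ρ}` has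
exactly `k` orbits (connected components). -/
noncomputable def mcount (n k : ℕ) : ℕ :=
  Nat.card {pr : Setoid (Fin n) × Setoid (Fin n) //
    IsNC pr.1 ∧ IsNC pr.2 ∧ numOrbits (meanderMap pr.1 pr.2) = k}

/-- The number of meanders on `2n` bridges. -/
noncomputable def meanderNum (n : ℕ) : ℕ := mcount n 1

/-!
Each step of `M_{π,ρ}` runs along an arch: from an even point along an arch of `A(π)`, from an
odd point along an arch of `A(ρ)`. Conversely every arch of either diagram is traversed by a step
of `M_{π,ρ}` in one direction or the other, so the orbit partition of `M_{π,ρ}` is exactly the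
join `A(π) ∨̃ A(ρ)`.
-/

section

variable {n : ℕ}

lemma mem_blockOf (S : Setoid (Fin n)) {i j : Fin n} : j ∈ blockOf S i ↔ S.r i j := by
  simp [blockOf]

lemma blockOf_congr (S : Setoid (Fin n)) {i j : Fin n} (h : S.r i j) :
    blockOf S i = blockOf S j := by
  ext k
  simp only [mem_blockOf]
  exact ⟨S.iseqv.trans (S.iseqv.symm h), S.iseqv.trans h⟩

lemma nextP_mem (S : Setoid (Fin n)) (i : Fin n) : nextP S i ∈ blockOf S i := by
  unfold nextP
  split
  · exact Finset.mem_of_mem_filter _ (Finset.min'_mem _ _)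
  · exact Finset.min'_mem _ _

lemma prevP_nextP (S : Setoid (Fin n)) (i : Fin n) : prevP S (nextP S i) = i := by
  have hblock : blockOf S (nextP S i) = blockOf S i :=
    (blockOf_congr S ((mem_blockOf S).1 (nextP_mem S i))).symm
  have hi : i ∈ blockOf S i := (mem_blockOf S).2 (S.iseqv.refl i)
  by_cases h : ((blockOf S i).filter (fun j => i < j)).Nonempty
  · -- `nextP S i` is the least element of the block above `i`, so nothing lies strictly between
    have hnext : nextP S i = ((blockOf S i).filter (fun j => i < j)).min' h := dif_pos h
    have hlt : i < nextP S i := hnext ▸ (Finset.mem_filter.1 (Finset.min'_mem _ h)).2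
    have hbelow : i ∈ (blockOf S (nextP S i)).filter (fun j => j < nextP S i) :=
      Finset.mem_filter.2 ⟨hblock ▸ hi, hlt⟩
    rw [prevP, dif_pos ⟨i, hbelow⟩]
    refine le_antisymm (Finset.max'_le _ _ _ fun j hj => ?_) (Finset.le_max' _ _ hbelow)
    rw [Finset.mem_filter, hblock] at hj
    by_contra! hij
    exact absurd (hnext ▸ Finset.min'_le _ j (Finset.mem_filter.2 ⟨hj.1, hij⟩)) (not_le.2 hj.2)
  · -- `i` is the largest element of its block and `nextP S i` the least
    have hnext : nextP S i = (blockOf S i).min' (blockOf_nonempty S i) := dif_neg h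
    have hempty : ¬ ((blockOf S (nextP S i)).filter (fun j => j < nextP S i)).Nonempty := by
      rintro ⟨j, hj⟩
      rw [Finset.mem_filter, hblock] at hj
      exact absurd (hnext ▸ Finset.min'_le _ j hj.1) (not_le.2 hj.2)
    rw [prevP, dif_neg hempty]
    refine le_antisymm (Finset.max'_le _ _ _ fun j hj => ?_) (Finset.le_max' _ _ (hblock ▸ hi))
    rw [hblock] at hj
    by_contra! hij
    exact h ⟨j, Finset.mem_filter.2 ⟨hj, hij⟩⟩

lemma nextP_prevP (S : Setoid (Fin n)) (i : Fin n) : nextP S (prevP S i) = i :=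
  have hinv : Function.LeftInverse (prevP S) (nextP S) := prevP_nextP S
  hinv.rightInverse_of_surjective (Finite.injective_iff_surjective.1 hinv.injective) i

lemma exists_eq_dEven_or_dOdd (x : Fin (2 * n)) : ∃ j : Fin n, x = dEven j ∨ x = dOdd j := by
  refine ⟨⟨x.val / 2, by omega⟩, ?_⟩
  rcases Nat.mod_two_eq_zero_or_one x.val with h | h
  · left; ext; simp only [dEven]; omega
  · right; ext; simp only [dOdd]; omega

lemma meanderMap_dEven (π ρ : Setoid (Fin n)) (j : Fin n) :
    meanderMap π ρ (dEven j) = dOdd (prevP π j) := by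
  simp [meanderMap, dEven]

lemma meanderMap_dOdd (π ρ : Setoid (Fin n)) (j : Fin n) :
    meanderMap π ρ (dOdd j) = dEven (nextP ρ j) := by
  simp [meanderMap, dOdd, Nat.add_div]

lemma archSetoid_rel (S : Setoid (Fin n)) (j : Fin n) :
    (archSetoid S).r (dOdd j) (dEven (nextP S j)) :=
  Relation.EqvGen.rel _ _ ⟨j, rfl, rfl⟩

lemma orbitSetoid_meanderMap (π ρ : Setoid (Fin n)) :
    orbitSetoid (meanderMap π ρ) = archSetoid π ⊔ archSetoid ρ := by
  apply le_antisymm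
  · refine Setoid.eqvGen_le fun x _ hx => hx ▸ ?_
    obtain ⟨j, rfl | rfl⟩ := exists_eq_dEven_or_dOdd x
    · rw [meanderMap_dEven]
      have harch := archSetoid_rel π (prevP π j)
      rw [nextP_prevP] at harch
      exact Setoid.le_def.1 le_sup_left (Setoid.symm' _ harch)
    · rw [meanderMap_dOdd]
      exact Setoid.le_def.1 le_sup_right (archSetoid_rel ρ j)
  · refine sup_le (Setoid.eqvGen_le ?_) (Setoid.eqvGen_le ?_) <;> rintro _ _ ⟨j, rfl, rfl⟩
    · refine Setoid.symm' _ (Relation.EqvGen.rel _ _ ?_)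
      rw [meanderMap_dEven, prevP_nextP]
    · exact Relation.EqvGen.rel _ _ (meanderMap_dOdd π ρ j)

end

theorem meander_iff_arch_sup_top_general (n : ℕ) (π ρ : Setoid (Fin n)) :
    orbitSetoid (meanderMap π ρ) = ⊤ ↔ archSetoid π ⊔ archSetoid ρ = ⊤ := by
  rw [orbitSetoid_meanderMap]

/-- `M_{π,ρ}` is a meander (exactly one orbit) iff `A(π) ∨̃ A(ρ) = 1_{2n}`,
join taken in the lattice of all partitions of `{1,…,2n}` (the full setoid
lattice). -/
theorem meander_iff_arch_sup_top (n : ℕ) (π ρ : Setoid (Fin n))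
    (hπ : IsNC π) (hρ : IsNC ρ) :
    orbitSetoid (meanderMap π ρ) = ⊤ ↔ archSetoid π ⊔ archSetoid ρ = ⊤ :=
  meander_iff_arch_sup_top_general n π ρ
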